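/- arXiv:2003.10064 — 2 statements merged into one kernel-verified Lean document; each statement's English description precedes it below -/
import Mathlib

section
/- Every read-write dependency is preserved by every reordering: if t1 →rw t2 holds with respect to the original commit timestamps (where t1 and t2 are each committed or pending with respect to M), then t1 →rw t2 holds with respect to the new commit timestamps assigned by any reordering ρ. -/
/-- A timestamp is a pair `(m, p)` of naturals, ordered lexicographically. -/
abbrev Timestamp : Type := ℕ ×ₗ ℕ

/-- A transaction: a start timestamp of the form `(m, 0)`, a commit timestamp
`(M, q)` with `q ≥ 1` and `start ≤ (M, 0)`, a finite read set of key/version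
pairs with versions at most the start timestamp, and a finite write set of keys. -/
structure Txn (Key : Type) where
  startTS : Timestamp
  commitTS : Timestamp
  start_snd : (ofLex startTS).2 = 0
  commit_pos : 1 ≤ (ofLex commitTS).2
  start_le : startTS ≤ toLex ((ofLex commitTS).1, 0)
  reads : Finset (Key × Timestamp)
  writes : Finset Key
  reads_snapshot : ∀ kv ∈ reads, kv.2 ≤ startTS

/-- Concurrency of two transactions with respect to a commit-timestamp assignment `C`. -/
def ConcurrentWith {Key : Type} (C : Txn Key → Timestamp) (t1 t2 : Txn Key) : Prop :=
  (C t1 < C t2 → t2.startTS < C t1) ∧ (C t2 < C t1 → t1.startTS < C t2)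

/-- Concurrency with respect to the original commit timestamps. -/
def Concurrent {Key : Type} (t1 t2 : Txn Key) : Prop :=
  ConcurrentWith (fun t => t.commitTS) t1 t2

/-- Write-write dependency `t1 →ww t2` w.r.t. commit assignment `C`. -/
def wwC {Key : Type} (C : Txn Key → Timestamp) (t1 t2 : Txn Key) : Prop :=
  t1 ≠ t2 ∧ (∃ k, k ∈ t1.writes ∧ k ∈ t2.writes) ∧ C t1 < C t2

/-- Write-read dependency `t1 →wr t2` w.r.t. commit assignment `C`. -/
def wrC {Key : Type} (C : Txn Key → Timestamp) (t1 t2 : Txn Key) : Prop :=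
  t1 ≠ t2 ∧ ∃ kv ∈ t2.reads, kv.1 ∈ t1.writes ∧ kv.2 = C t1

/-- Read-write dependency `t1 →rw t2` w.r.t. commit assignment `C`. -/
def rwC {Key : Type} (C : Txn Key → Timestamp) (t1 t2 : Txn Key) : Prop :=
  t1 ≠ t2 ∧ ∃ kv ∈ t1.reads, kv.1 ∈ t2.writes ∧ kv.2 < C t2

/-- The dependency relation: union of ww, wr and rw. -/
def depC {Key : Type} (C : Txn Key → Timestamp) (t1 t2 : Txn Key) : Prop :=
  wwC C t1 t2 ∨ wrC C t1 t2 ∨ rwC C t1 t2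

/-- `t` is committed with respect to the next block number `M`. -/
def Committed {Key : Type} (M : ℕ) (t : Txn Key) : Prop :=
  (ofLex t.commitTS).1 < M

/-- `t` is pending with respect to the next block number `M`:
its commit timestamp is `(M, p)` (with `p ≥ 1` automatic). -/
def Pending {Key : Type} (M : ℕ) (t : Txn Key) : Prop :=
  (ofLex t.commitTS).1 = M

/-- A reordering of the transactions in `T`: it assigns to each pending
transaction a new commit timestamp `(M, p')` with `p' ≥ 1`, injectively on `T`,
leaving committed transactions' commit timestamps (and, implicitly, all start
timestamps, read sets and write sets) unchanged. -/
structure Reordering {Key : Type} (M : ℕ) (T : Finset (Txn Key)) where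
  newCommit : Txn Key → Timestamp
  fix_committed : ∀ t ∈ T, Committed M t → newCommit t = t.commitTS
  pending_block : ∀ t ∈ T, Pending M t → (ofLex (newCommit t)).1 = M
  pending_pos : ∀ t ∈ T, Pending M t → 1 ≤ (ofLex (newCommit t)).2
  inj : ∀ t ∈ T, ∀ u ∈ T, newCommit t = newCommit u → t = u

/-! A committed `t2` keeps its commit timestamp, so the inequality `v < commit(t2)` survives
unchanged. A pending `t2` is moved to some `(M, p')` with `p' ≥ 1`, which lies strictly above
`(M, 0)`; and every version read by a committed or pending `t1` is a snapshot read, hence at most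
`start(t1) ≤ (M, 0)`. -/

namespace Txn

variable {Key : Type}

theorem startTS_le_of_commit_fst_le (t : Txn Key) {M : ℕ} (hM : (ofLex t.commitTS).1 ≤ M) :
    t.startTS ≤ toLex (M, 0) :=
  t.start_le.trans (Prod.Lex.toLex_mono ⟨hM, le_rfl⟩)

theorem version_le_of_mem_reads {t : Txn Key} {kv : Key × Timestamp} (hkv : kv ∈ t.reads)
    {M : ℕ} (hM : (ofLex t.commitTS).1 ≤ M) : kv.2 ≤ toLex (M, 0) :=
  (t.reads_snapshot kv hkv).trans (t.startTS_le_of_commit_fst_le hM)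

end Txn

theorem commit_fst_le_of_committed_or_pending {Key : Type} {M : ℕ} {t : Txn Key}
    (h : Committed M t ∨ Pending M t) : (ofLex t.commitTS).1 ≤ M :=
  h.elim le_of_lt le_of_eq

theorem Reordering.block_lt_newCommit {Key : Type} {M : ℕ} {T : Finset (Txn Key)}
    (ρ : Reordering M T) {t : Txn Key} (ht : t ∈ T) (hp : Pending M t) :
    toLex (M, 0) < ρ.newCommit t :=
  Prod.Lex.lt_iff.2 (Or.inr ⟨(ρ.pending_block t ht hp).symm, ρ.pending_pos t ht hp⟩)

theorem reorder_preserves_rw_general {Key : Type} (M : ℕ) (T : Finset (Txn Key))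
    (ρ : Reordering M T) (t1 t2 : Txn Key) (h2 : t2 ∈ T)
    (hcp1 : Committed M t1 ∨ Pending M t1) (hcp2 : Committed M t2 ∨ Pending M t2)
    (hrw : rwC (fun x => x.commitTS) t1 t2) :
    rwC ρ.newCommit t1 t2 := by
  obtain ⟨hne, kv, hkv, hw, hlt⟩ := hrw
  refine ⟨hne, kv, hkv, hw, ?_⟩
  rcases hcp2 with hc2 | hp2
  · rwa [ρ.fix_committed t2 h2 hc2]
  · exact (Txn.version_le_of_mem_reads hkv (commit_fst_le_of_committed_or_pending hcp1)).trans_lt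
      (ρ.block_lt_newCommit h2 hp2)

/-- every read-write dependency is preserved by every reordering:
if `t1 →rw t2` w.r.t. the original commit timestamps (with `t1, t2 ∈ T` each
committed or pending w.r.t. `M`), then `t1 →rw t2` w.r.t. the new commit
timestamps assigned by any reordering `ρ` of `T`. -/
theorem reorder_preserves_rw {Key : Type} (M : ℕ) (T : Finset (Txn Key))
    (ρ : Reordering M T) (t1 t2 : Txn Key) (h1 : t1 ∈ T) (h2 : t2 ∈ T)
    (hcp1 : Committed M t1 ∨ Pending M t1) (hcp2 : Committed M t2 ∨ Pending M t2)
    (hrw : rwC (fun x => x.commitTS) t1 t2) :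
    rwC ρ.newCommit t1 t2 :=
  reorder_preserves_rw_general M T ρ t1 t2 h2 hcp1 hcp2 hrw
end

section
/- Reordering does not impact dependencies involving committed transactions: if dep(t1, t2) holds with respect to the original commit timestamps and at least one of t1, t2 is committed (the other being committed or pending with respect to M), then dep(t1, t2) holds with respect to the new commit timestamps assigned by any reordering ρ. -/
/-!
Every timestamp that a dependency with a committed endpoint compares lies in a block before `M`:
a read version is strictly below the reader's commit timestamp, and a transaction committing
before a committed one is committed. A reordering fixes the commit timestamps of committed
transactions and keeps pending ones in block `M`, so such timestamps
stay fixed or remain below the new timestamps of block `M`.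
-/

theorem Txn.read_lt_commitTS {Key : Type} (t : Txn Key) {kv : Key × Timestamp}
    (hkv : kv ∈ t.reads) : kv.2 < t.commitTS :=
  calc kv.2 ≤ t.startTS := t.reads_snapshot kv hkv
    _ ≤ toLex ((ofLex t.commitTS).1, 0) := t.start_le
    _ < t.commitTS := Prod.Lex.lt_iff.2 (Or.inr ⟨rfl, t.commit_pos⟩)

namespace Committed

variable {Key : Type} {M : ℕ} {t u : Txn Key}

theorem block_lt_of_le (hu : Committed M u) {s : Timestamp} (hs : s ≤ u.commitTS) :
    (ofLex s).1 < M :=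
  (Prod.Lex.monotone_fst _ _ hs).trans_lt hu

theorem of_commitTS_le (hu : Committed M u) (h : t.commitTS ≤ u.commitTS) : Committed M t :=
  hu.block_lt_of_le h

end Committed

namespace Reordering

variable {Key : Type} {M : ℕ} {T : Finset (Txn Key)} (ρ : Reordering M T) {t1 t2 : Txn Key}

theorem lt_newCommit {u : Txn Key} (hu : u ∈ T) (hcp : Committed M u ∨ Pending M u)
    {s : Timestamp} (hs : (ofLex s).1 < M) (hlt : s < u.commitTS) : s < ρ.newCommit u := by
  rcases hcp with hc | hp
  · rwa [ρ.fix_committed u hu hc]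
  · exact Prod.Lex.lt_iff.2 (Or.inl (hs.trans_eq (ρ.pending_block u hu hp).symm))

theorem wwC_newCommit (h1 : t1 ∈ T) (h2 : t2 ∈ T) (hcp2 : Committed M t2 ∨ Pending M t2)
    (hone : Committed M t1 ∨ Committed M t2) (h : wwC (fun x => x.commitTS) t1 t2) :
    wwC ρ.newCommit t1 t2 := by
  obtain ⟨hne, hk, hlt⟩ := h
  have hc1 : Committed M t1 := hone.elim id (·.of_commitTS_le hlt.le)
  refine ⟨hne, hk, ?_⟩
  rw [ρ.fix_committed t1 h1 hc1]
  exact ρ.lt_newCommit h2 hcp2 hc1 hlt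

theorem wrC_newCommit (h1 : t1 ∈ T) (hone : Committed M t1 ∨ Committed M t2)
    (h : wrC (fun x => x.commitTS) t1 t2) : wrC ρ.newCommit t1 t2 := by
  obtain ⟨hne, kv, hkv, hw, heq⟩ := h
  have hc1 : Committed M t1 :=
    hone.elim id (·.of_commitTS_le (heq.symm.trans_le (t2.read_lt_commitTS hkv).le))
  exact ⟨hne, kv, hkv, hw, heq.trans (ρ.fix_committed t1 h1 hc1).symm⟩

theorem rwC_newCommit (h2 : t2 ∈ T) (hcp2 : Committed M t2 ∨ Pending M t2)
    (hone : Committed M t1 ∨ Committed M t2) (h : rwC (fun x => x.commitTS) t1 t2) :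
    rwC ρ.newCommit t1 t2 := by
  obtain ⟨hne, kv, hkv, hw, hlt⟩ := h
  have hkvM : (ofLex kv.2).1 < M :=
    hone.elim (·.block_lt_of_le (t1.read_lt_commitTS hkv).le) (·.block_lt_of_le hlt.le)
  exact ⟨hne, kv, hkv, hw, ρ.lt_newCommit h2 hcp2 hkvM hlt⟩

end Reordering

theorem reorder_preserves_committed_dep_general {Key : Type} (M : ℕ) (T : Finset (Txn Key))
    (ρ : Reordering M T) (t1 t2 : Txn Key) (h1 : t1 ∈ T) (h2 : t2 ∈ T)
    (hcp2 : Committed M t2 ∨ Pending M t2)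
    (hone : Committed M t1 ∨ Committed M t2)
    (hdep : depC (fun x => x.commitTS) t1 t2) :
    depC ρ.newCommit t1 t2 := by
  rcases hdep with h | h | h
  · exact Or.inl (ρ.wwC_newCommit h1 h2 hcp2 hone h)
  · exact Or.inr (Or.inl (ρ.wrC_newCommit h1 hone h))
  · exact Or.inr (Or.inr (ρ.rwC_newCommit h2 hcp2 hone h))

/-- reordering does not impact dependencies involving committed
transactions: if `dep(t1, t2)` holds w.r.t. the original commit timestamps and
at least one of `t1, t2` is committed (the other committed or pending w.r.t.
`M`), then `dep(t1, t2)` holds w.r.t. the new commit timestamps assigned by any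
reordering `ρ` of `T`. -/
theorem reorder_preserves_committed_dep {Key : Type} (M : ℕ) (T : Finset (Txn Key))
    (ρ : Reordering M T) (t1 t2 : Txn Key) (h1 : t1 ∈ T) (h2 : t2 ∈ T)
    (hcp1 : Committed M t1 ∨ Pending M t1) (hcp2 : Committed M t2 ∨ Pending M t2)
    (hone : Committed M t1 ∨ Committed M t2)
    (hdep : depC (fun x => x.commitTS) t1 t2) :
    depC ρ.newCommit t1 t2 :=
  reorder_preserves_committed_dep_general M T ρ t1 t2 h1 h2 hcp2 hone hdep
end
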